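/- Let M be a conical commutative additive monoid and C an archimedean component of M. Then the set sr(C) = { sr(c) : c ∈ C } equals one of: the singleton {1}, the set of all integers ≥ 2, the singleton {∞}, or a finite subset of the integers ≥ 2. -/
import Mathlib


/-- `a` satisfies the `n`-stable rank condition in `M`. -/
def SRCond {M : Type*} [AddCommMonoid M] (a : M) (n : ℕ) : Prop :=
  ∀ x y : M, n • a + x = a + y → ∃ e : M, n • a = a + e ∧ e + x = y

/-- The stable rank of `a`: the least positive integer `n` such that `a` satisfies
the `n`-stable rank condition, or `∞` if no such `n` exists. -/
noncomputable def sr {M : Type*} [AddCommMonoid M] (a : M) : ℕ∞ :=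
  sInf {n : ℕ∞ | ∃ m : ℕ, 0 < m ∧ SRCond a m ∧ n = (m : ℕ∞)}

section AuxA

variable {M : Type*} [AddCommMonoid M]


theorem srcond_mono {a : M} {n m : ℕ} (h : SRCond a n) (hnm : n ≤ m) : SRCond a m := by
  intro x y hxy
  obtain ⟨t, rfl⟩ : ∃ t, m = n + t := ⟨m - n, by omega⟩
  have hx : n • a + (t • a + x) = a + y := by
    rw [← hxy]; module
  obtain ⟨e, he1, he2⟩ := h _ _ hx
  refine ⟨e + t • a, ?_, ?_⟩
  · calc (n + t) • a = n • a + t • a := by module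
      _ = (a + e) + t • a := by rw [he1]
      _ = a + (e + t • a) := by module
  · rw [← he2]; module

theorem srcond_key {a : M} {n : ℕ} (hn : SRCond a n) :
    ∀ (j : ℕ) (x y : M), (n + j) • a + x = (1 + j) • a + y →
      ∃ e, n • a = a + e ∧ e + x = y := by
  intro j
  induction j with
  | zero =>
    intro x y h
    apply hn
    have h' : (n + 0) • a + x = (1 + 0) • a + y := h
    calc n • a + x = (n + 0) • a + x := by module
      _ = (1 + 0) • a + y := h'
      _ = a + y := by module
  | succ j ih =>
    intro x y h
    have h1 : n • a + ((j + 1) • a + x) = a + ((j + 1) • a + y) := by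
      calc n • a + ((j + 1) • a + x) = (n + (j + 1)) • a + x := by module
        _ = (1 + (j + 1)) • a + y := h
        _ = a + ((j + 1) • a + y) := by module
    obtain ⟨e₁, he₁, he₂⟩ := hn _ _ h1
    have h2 : (n + j) • a + x = (1 + j) • a + y := by
      calc (n + j) • a + x = (a + e₁) + (j • a + x) := by rw [← he₁]; module
        _ = e₁ + ((j + 1) • a + x) := by module
        _ = (j + 1) • a + y := he₂
        _ = (1 + j) • a + y := by module
    exact ih _ _ h2

theorem srcond_nsmul {c : M} {n q N : ℕ} (h : SRCond c n) (hq : 1 ≤ q)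
    (hN : n + q ≤ N * q + 1) : SRCond (q • c) N := by
  obtain ⟨q₀, rfl⟩ : ∃ q₀, q = q₀ + 1 := ⟨q - 1, by omega⟩
  intro x y hxy
  obtain ⟨s, hs⟩ : ∃ s, N * (q₀ + 1) = n + q₀ + s := ⟨N * (q₀ + 1) - (n + q₀), by omega⟩
  have h1 : (n + q₀) • c + (s • c + x) = (1 + q₀) • c + y := by
    calc (n + q₀) • c + (s • c + x) = (n + q₀ + s) • c + x := by module
      _ = N • ((q₀ + 1) • c) + x := by rw [smul_smul, hs]
      _ = (q₀ + 1) • c + y := hxy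
      _ = (1 + q₀) • c + y := by module
  obtain ⟨e, he1, he2⟩ := srcond_key h q₀ _ _ h1
  refine ⟨e + s • c, ?_, ?_⟩
  · calc N • ((q₀ + 1) • c) = (n + q₀ + s) • c := by rw [smul_smul, hs]
      _ = q₀ • c + n • c + s • c := by module
      _ = q₀ • c + (c + e) + s • c := by rw [he1]
      _ = (q₀ + 1) • c + (e + s • c) := by module
  · rw [← he2]; module

theorem srcond_add {c d : M} {N : ℕ} (hc : SRCond c N) (hd : SRCond d N) :
    SRCond (c + d) N := by
  intro x y hxy
  have h1 : N • c + (N • d + x) = c + (d + y) := by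
    calc N • c + (N • d + x) = N • (c + d) + x := by module
      _ = (c + d) + y := hxy
      _ = c + (d + y) := by module
  obtain ⟨e₁, he₁, he₁'⟩ := hc _ _ h1
  have h2 : N • d + (e₁ + x) = d + y := by
    calc N • d + (e₁ + x) = e₁ + (N • d + x) := by module
      _ = d + y := he₁'
  obtain ⟨e₂, he₂, he₂'⟩ := hd _ _ h2
  refine ⟨e₁ + e₂, ?_, ?_⟩
  · calc N • (c + d) = N • c + N • d := by module
      _ = (c + e₁) + (d + e₂) := by rw [he₁, he₂]
      _ = (c + d) + (e₁ + e₂) := by module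
  · rw [← he₂']; module

theorem srcond_nsmul_weak {c : M} {N : ℕ} (h : SRCond c N) :
    ∀ q, 1 ≤ q → SRCond (q • c) N := by
  intro q
  induction q with
  | zero => omega
  | succ q₀ ih =>
    intro _
    rcases Nat.eq_zero_or_pos q₀ with h0 | h0
    · subst h0
      have e : (0 + 1) • c = c := by module
      rw [e]; exact h
    · have e : (q₀ + 1) • c = q₀ • c + c := by module
      rw [e]
      exact srcond_add (ih h0) h

theorem srcond_up {B b u v : M} {N j m : ℕ} (hB : SRCond B N) (h1 : B = b + u)
    (h2 : B + v = j • b) (hm : N * j ≤ m) : SRCond b m := by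
  intro x y hxy
  obtain ⟨t, rfl⟩ : ∃ t, m = N * j + t := ⟨m - N * j, by omega⟩
  have h3 : N • B + (N • v + t • b + u + x) = B + y := by
    calc N • B + (N • v + t • b + u + x)
        = (N • (B + v) + t • b + x) + u := by module
      _ = (N • (j • b) + t • b + x) + u := by rw [h2]
      _ = ((N * j + t) • b + x) + u := by module
      _ = (b + y) + u := by rw [hxy]
      _ = B + y := by rw [h1]; module
  obtain ⟨E₀, hE₀, hE₀'⟩ := hB _ _ h3
  refine ⟨E₀ + N • v + t • b + u, ?_, ?_⟩
  · calc (N * j + t) • b = N • (j • b) + t • b := by module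
      _ = N • (B + v) + t • b := by rw [h2]
      _ = (B + E₀) + (N • v + t • b) := by rw [← hE₀]; module
      _ = b + (E₀ + N • v + t • b + u) := by rw [h1]; module
  · calc (E₀ + N • v + t • b + u) + x = E₀ + (N • v + t • b + u + x) := by module
      _ = y := hE₀'

theorem srcond_cont {c : M} {q N : ℕ} (h : SRCond ((q + 1) • c) N) (hq : N ≤ q) :
    SRCond (q • c) (N + 1) := by
  intro x y hxy
  obtain ⟨t, ht⟩ : ∃ t, q = N + t := ⟨q - N, by omega⟩
  have harith1 : N * (q + 1) + (t + 1) = (N + 1) * q + 1 := by subst ht; ring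
  have harith2 : N * (q + 1) + t = (N + 1) * q := by subst ht; ring
  have h1 : N • ((q + 1) • c) + ((t + 1) • c + x) = (q + 1) • c + y := by
    calc N • ((q + 1) • c) + ((t + 1) • c + x)
        = (N * (q + 1) + (t + 1)) • c + x := by module
      _ = ((N + 1) * q + 1) • c + x := by rw [harith1]
      _ = ((N + 1) • (q • c) + x) + c := by module
      _ = (q • c + y) + c := by rw [hxy]
      _ = (q + 1) • c + y := by module
  obtain ⟨E₁, hE₁, hE₁'⟩ := h _ _ h1
  refine ⟨E₁ + (t + 1) • c, ?_, ?_⟩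
  · calc (N + 1) • (q • c) = ((N + 1) * q) • c := by module
      _ = (N * (q + 1) + t) • c := by rw [harith2]
      _ = N • ((q + 1) • c) + t • c := by module
      _ = ((q + 1) • c + E₁) + t • c := by rw [hE₁]
      _ = q • c + (E₁ + (t + 1) • c) := by module
  · calc (E₁ + (t + 1) • c) + x = E₁ + ((t + 1) • c + x) := by module
      _ = y := hE₁'



theorem canc_of_srcond_one (hcon : ∀ x y : M, x + y = 0 → x = 0 ∧ y = 0) {w : M}
    (h : SRCond w 1) : ∀ x y : M, w + x = w + y → x = y := by
  intro x y hxy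
  have h1 : (1 : ℕ) • w + x = w + y := by rw [one_smul]; exact hxy
  obtain ⟨e, he, he'⟩ := h x y h1
  rw [one_smul] at he
  have h2 : (1 : ℕ) • w + e = w + 0 := by rw [one_smul, add_zero, ← he]
  obtain ⟨g, _, hg'⟩ := h e 0 h2
  have he0 : e = 0 := (hcon g e hg').2
  rw [he0, zero_add] at he'
  exact he'

theorem srcond_one_of_canc {w : M} (h : ∀ x y : M, w + x = w + y → x = y) : SRCond w 1 := by
  intro x y hxy
  rw [one_smul] at hxy
  exact ⟨0, by rw [one_smul, add_zero], by rw [zero_add]; exact h x y hxy⟩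

theorem canc_nsmul {w : M} (h : ∀ x y : M, w + x = w + y → x = y) :
    ∀ (k : ℕ) (x y : M), k • w + x = k • w + y → x = y := by
  intro k
  induction k with
  | zero => intro x y hxy; simpa using hxy
  | succ k ih =>
    intro x y hxy
    have h2 : k • w + (w + x) = k • w + (w + y) := by
      calc k • w + (w + x) = (k + 1) • w + x := by module
        _ = (k + 1) • w + y := hxy
        _ = k • w + (w + y) := by module
    exact h x y (ih _ _ h2)

theorem canc_of_eq {b z W : M} (hW : b + z = W) (h : ∀ x y : M, W + x = W + y → x = y) :
    ∀ x y : M, b + x = b + y → x = y := by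
  intro x y hxy
  apply h x y
  calc W + x = (b + x) + z := by rw [← hW]; abel
    _ = (b + y) + z := by rw [hxy]
    _ = W + y := by rw [← hW]; abel

-- sr API
theorem sr_le {a : M} {m : ℕ} (hm : 0 < m) (h : SRCond a m) : sr a ≤ (m : ℕ∞) :=
  sInf_le ⟨m, hm, h, rfl⟩

theorem one_le_sr (a : M) : 1 ≤ sr a := by
  apply le_sInf
  rintro _ ⟨m, hm, _, rfl⟩
  exact_mod_cast hm

theorem srcond_of_sr_le {a : M} {m : ℕ} (hm : 0 < m) (h : sr a ≤ (m : ℕ∞)) : SRCond a m := by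
  by_contra hc
  have hup : ((m + 1 : ℕ) : ℕ∞) ≤ sr a := by
    apply le_sInf
    rintro _ ⟨m', hm', hcond, rfl⟩
    have : ¬ m' ≤ m := fun hle => hc (srcond_mono hcond hle)
    exact_mod_cast by omega
  have : ((m + 1 : ℕ) : ℕ∞) ≤ (m : ℕ∞) := le_trans hup h
  have : m + 1 ≤ m := by exact_mod_cast this
  omega

theorem sr_spec {a : M} (h : sr a ≠ ⊤) : ∃ n : ℕ, 0 < n ∧ sr a = (n : ℕ∞) ∧ SRCond a n := by
  have hn : ((sr a).toNat : ℕ∞) = sr a := ENat.coe_toNat h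
  refine ⟨(sr a).toNat, ?_, hn.symm, srcond_of_sr_le ?_ (le_of_eq hn.symm)⟩ <;>
  · have h1 : (1 : ℕ∞) ≤ ((sr a).toNat : ℕ∞) := by rw [hn]; exact one_le_sr a
    exact_mod_cast h1


theorem comp_cover {a b c : M}
    (hb1 : ∃ m : ℕ, 0 < m ∧ ∃ z : M, b + z = m • a)
    (hc2 : ∃ m : ℕ, 0 < m ∧ ∃ z : M, a + z = m • c) :
    ∃ P : ℕ, 0 < P ∧ ∃ w : M, b + w = P • c := by
  obtain ⟨p, hp, z, hz⟩ := hb1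
  obtain ⟨p₃, hp₃, z₂, hz₂⟩ := hc2
  refine ⟨p * p₃, by positivity, z + p • z₂, ?_⟩
  calc b + (z + p • z₂) = (b + z) + p • z₂ := by module
    _ = p • a + p • z₂ := by rw [hz]
    _ = p • (a + z₂) := by module
    _ = p • (p₃ • c) := by rw [hz₂]
    _ = (p * p₃) • c := by module

theorem comp_nsmul {a b : M}
    (hb : (∃ m : ℕ, 0 < m ∧ ∃ z : M, b + z = m • a) ∧
          (∃ m : ℕ, 0 < m ∧ ∃ z : M, a + z = m • b))
    {q : ℕ} (hq : 0 < q) :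
    (∃ m : ℕ, 0 < m ∧ ∃ z : M, q • b + z = m • a) ∧
    (∃ m : ℕ, 0 < m ∧ ∃ z : M, a + z = m • (q • b)) := by
  obtain ⟨⟨p, hp, z, hz⟩, ⟨p', hp', z', hz'⟩⟩ := hb
  obtain ⟨q₀, rfl⟩ : ∃ q₀, q = q₀ + 1 := ⟨q - 1, by omega⟩
  constructor
  · refine ⟨(q₀ + 1) * p, by positivity, (q₀ + 1) • z, ?_⟩
    calc (q₀ + 1) • b + (q₀ + 1) • z = (q₀ + 1) • (b + z) := by module
      _ = (q₀ + 1) • (p • a) := by rw [hz]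
      _ = ((q₀ + 1) * p) • a := by module
  · refine ⟨p', hp', z' + (p' * q₀) • b, ?_⟩
    calc a + (z' + (p' * q₀) • b) = (a + z') + (p' * q₀) • b := by module
      _ = p' • b + (p' * q₀) • b := by rw [hz']
      _ = p' • ((q₀ + 1) • b) := by module


end AuxA

theorem stmt_15 {M : Type*} [AddCommMonoid M]
    (hconical : ∀ x y : M, x + y = 0 → x = 0 ∧ y = 0)
    (C : Set M)
    (hC : ∃ a : M, C = {x : M |
        (∃ m : ℕ, 0 < m ∧ ∃ z : M, x + z = m • a) ∧
        (∃ m : ℕ, 0 < m ∧ ∃ z : M, a + z = m • x)}) :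
    sr '' C = {1} ∨
    sr '' C = {n : ℕ∞ | 2 ≤ n ∧ n < ⊤} ∨
    sr '' C = {⊤} ∨
    ((sr '' C).Finite ∧ sr '' C ⊆ {n : ℕ∞ | 2 ≤ n ∧ n < ⊤}) := by
  classical
  obtain ⟨a, rfl⟩ := hC
  set Cs : Set M := {x : M |
        (∃ m : ℕ, 0 < m ∧ ∃ z : M, x + z = m • a) ∧
        (∃ m : ℕ, 0 < m ∧ ∃ z : M, a + z = m • x)} with hCs
  have hmem : ∀ b : M, b ∈ Cs ↔
      ((∃ m : ℕ, 0 < m ∧ ∃ z : M, b + z = m • a) ∧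
       (∃ m : ℕ, 0 < m ∧ ∃ z : M, a + z = m • b)) := fun b => Iff.rfl
  have haC : a ∈ Cs := by
    rw [hmem]
    exact ⟨⟨1, one_pos, 0, by rw [add_zero, one_smul]⟩, ⟨1, one_pos, 0, by rw [add_zero, one_smul]⟩⟩
  by_cases h1 : ∃ b ∈ Cs, sr b = 1
  · left
    obtain ⟨c₀, hc₀, hc₀1⟩ := h1
    have hsr1 : SRCond c₀ 1 := by
      apply srcond_of_sr_le one_pos
      rw [hc₀1]; exact_mod_cast le_refl _
    have hcanc := canc_of_srcond_one hconical hsr1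
    ext v
    simp only [Set.mem_image, Set.mem_singleton_iff]
    constructor
    · rintro ⟨b, hb, rfl⟩
      obtain ⟨P, hP, w, hw⟩ := comp_cover ((hmem b).mp hb).1 ((hmem c₀).mp hc₀).2
      have hcb := canc_of_eq hw (canc_nsmul hcanc P)
      have hble : sr b ≤ ((1 : ℕ) : ℕ∞) := sr_le one_pos (srcond_one_of_canc hcb)
      have : sr b ≤ 1 := by exact_mod_cast hble
      exact le_antisymm this (one_le_sr b)
    · rintro rfl
      exact ⟨c₀, hc₀, hc₀1⟩
  · by_cases h2 : ∃ b ∈ Cs, sr b = ⊤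
    · right; right; left
      obtain ⟨c₁, hc₁, hc₁top⟩ := h2
      have hall : ∀ b ∈ Cs, sr b = ⊤ := by
        intro b hb
        by_contra hbne
        obtain ⟨N, hN, _, hbcond⟩ := sr_spec hbne
        obtain ⟨P, hP, w, hw⟩ := comp_cover ((hmem c₁).mp hc₁).1 ((hmem b).mp hb).2
        obtain ⟨j, hj, v, hv⟩ :=
          comp_cover (comp_nsmul ((hmem b).mp hb) hP).1 ((hmem c₁).mp hc₁).2
        have hBcond : SRCond (P • b) N := srcond_nsmul_weak hbcond P hP
        have hcond₁ : SRCond c₁ (N * j) := srcond_up hBcond hw.symm hv (le_refl _)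
        have hle : sr c₁ ≤ ((N * j : ℕ) : ℕ∞) := sr_le (by positivity) hcond₁
        rw [hc₁top] at hle
        exact (ENat.coe_ne_top (N * j)) (top_le_iff.mp hle)
      ext v
      simp only [Set.mem_image, Set.mem_singleton_iff]
      constructor
      · rintro ⟨b, hb, rfl⟩; exact hall b hb
      · rintro rfl; exact ⟨c₁, hc₁, hc₁top⟩
    · -- all values in [2, ⊤)
      have hge2 : ∀ b ∈ Cs, (2 : ℕ∞) ≤ sr b ∧ sr b < ⊤ := by
        intro b hb
        have hne : sr b ≠ ⊤ := fun h => h2 ⟨b, hb, h⟩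
        obtain ⟨N, hN, hsrb, _⟩ := sr_spec hne
        have hN1 : N ≠ 1 := by
          intro h
          exact h1 ⟨b, hb, by rw [hsrb, h]; norm_num⟩
        refine ⟨?_, ?_⟩
        · rw [hsrb]; exact_mod_cast (by omega : 2 ≤ N)
        · rw [hsrb]; exact_mod_cast lt_top_iff_ne_top.mpr (ENat.coe_ne_top N)
      by_cases hfin : (sr '' Cs).Finite
      · right; right; right
        refine ⟨hfin, ?_⟩
        rintro v ⟨b, hb, rfl⟩
        exact ⟨(hge2 b hb).1, (hge2 b hb).2⟩
      · right; left
        ext v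
        simp only [Set.mem_image, Set.mem_setOf_eq]
        constructor
        · rintro ⟨b, hb, rfl⟩
          exact ⟨(hge2 b hb).1, (hge2 b hb).2⟩
        · rintro ⟨hv2, hvtop⟩
          have hvne : v ≠ ⊤ := hvtop.ne
          set m₀ : ℕ := v.toNat with hm₀def
          have hvm : (m₀ : ℕ∞) = v := ENat.coe_toNat hvne
          have hm₀2 : 2 ≤ m₀ := by
            have : (2 : ℕ∞) ≤ (m₀ : ℕ∞) := by rw [hvm]; exact hv2
            exact_mod_cast this
          -- big element
          have hbig : ∃ c ∈ Cs, ∃ n : ℕ, sr c = (n : ℕ∞) ∧ m₀ * m₀ ≤ n := by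
            by_contra hcon'
            push_neg at hcon'
            apply hfin
            have hsub : sr '' Cs ⊆ (fun k : ℕ => (k : ℕ∞)) '' (Set.Iio (m₀ * m₀)) := by
              rintro _ ⟨b, hb, rfl⟩
              have hne : sr b ≠ ⊤ := fun h => h2 ⟨b, hb, h⟩
              obtain ⟨N, hN, hsrb, _⟩ := sr_spec hne
              exact ⟨N, by have h' := hcon' b hb N hsrb; simp only [Set.mem_Iio]; omega, hsrb.symm⟩
            exact ((Set.finite_Iio _).image _).subset hsub
          obtain ⟨c, hc, n, hsrc, hnbig⟩ := hbig
          have hn0 : 0 < n := by nlinarith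
          have hncond : SRCond c n := srcond_of_sr_le hn0 (le_of_eq hsrc)
          have hq_netop : ∀ q : ℕ, 1 ≤ q → sr (q • c) ≠ ⊤ := by
            intro q hq htop
            have hc' : SRCond (q • c) n := srcond_nsmul_weak hncond q hq
            have := sr_le hn0 hc'
            rw [htop] at this
            exact (ENat.coe_ne_top n) (top_le_iff.mp this)
          have hq_ne1 : ∀ q : ℕ, 1 ≤ q → ∀ N : ℕ, sr (q • c) = (N : ℕ∞) → N ≠ 1 := by
            intro q hq N hsrq hN1
            exact h1 ⟨q • c, (hmem _).mpr (comp_nsmul ((hmem c).mp hc) hq), by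
              rw [hsrq, hN1]; norm_num⟩
          have hLB : ∀ q : ℕ, 1 ≤ q → ∀ N : ℕ, sr (q • c) = (N : ℕ∞) → n ≤ N * q := by
            intro q hq N hsrq
            have hNpos : 0 < N := by
              have h1' : (1 : ℕ∞) ≤ ((N : ℕ) : ℕ∞) := by rw [← hsrq]; exact one_le_sr _
              exact_mod_cast h1'
            have hcond : SRCond (q • c) N := srcond_of_sr_le hNpos (le_of_eq hsrq)
            obtain ⟨q₀, rfl⟩ : ∃ q₀, q = q₀ + 1 := ⟨q - 1, by omega⟩
            have hcc : SRCond c (N * (q₀ + 1)) := by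
              exact srcond_up (u := q₀ • c) (v := 0) hcond (by module) (add_zero _)
                (le_refl _)
            have hle := sr_le (by positivity) hcc
            rw [hsrc] at hle
            exact_mod_cast hle
          rcases eq_or_lt_of_le hm₀2 with hm2 | hm3
          · -- m₀ = 2 : use n • c
            have hcond2 : SRCond (n • c) 2 := srcond_nsmul hncond hn0 (by omega)
            have hle : sr (n • c) ≤ ((2 : ℕ) : ℕ∞) := sr_le (by norm_num) hcond2
            obtain ⟨N, hN, hsrq, _⟩ := sr_spec (hq_netop n hn0)
            have hle' : N ≤ 2 := by
              rw [hsrq] at hle; exact_mod_cast hle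
            have hN1 : N ≠ 1 := hq_ne1 n hn0 N hsrq
            have hN2 : N = 2 := by omega
            refine ⟨n • c, (hmem _).mpr (comp_nsmul ((hmem c).mp hc) hn0), ?_⟩
            rw [hsrq, hN2, ← hvm, ← hm2]
          · -- m₀ ≥ 3
            set P : ℕ → Prop := fun q => 1 ≤ q ∧ (m₀ : ℕ∞) ≤ sr (q • c) with hPdef
            have hm₀n : m₀ ≤ n := by nlinarith
            have hdiv1 : 1 ≤ n / m₀ := (Nat.one_le_div_iff (by omega)).mpr hm₀n
            have hdivm : m₀ ≤ n / m₀ := (Nat.le_div_iff_mul_le (by omega)).mpr hnbig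
            have hq₁ : P (n / m₀) := by
              refine ⟨hdiv1, ?_⟩
              by_contra hlt
              push_neg at hlt
              obtain ⟨N, hN, hsrq, _⟩ := sr_spec (hq_netop (n / m₀) hdiv1)
              have hNlt : N < m₀ := by
                rw [hsrq] at hlt; exact_mod_cast hlt
              have hLB' := hLB (n / m₀) hdiv1 N hsrq
              have h1' : (n / m₀) * m₀ ≤ n := Nat.div_mul_le_self n m₀
              have h3' : N * (n / m₀) ≤ (m₀ - 1) * (n / m₀) :=
                Nat.mul_le_mul_right _ (by omega)
              have h4' : (m₀ - 1) * (n / m₀) + 1 * (n / m₀) = m₀ * (n / m₀) := by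
                rw [← Nat.add_mul]; congr 1; omega
              have h5' : m₀ * (n / m₀) = (n / m₀) * m₀ := Nat.mul_comm _ _
              omega
            have hPn : ¬ P n := by
              rintro ⟨-, hPn'⟩
              have hc2 : SRCond (n • c) 2 := srcond_nsmul hncond hn0 (by omega)
              have hle : sr (n • c) ≤ ((2 : ℕ) : ℕ∞) := sr_le (by norm_num) hc2
              have : (m₀ : ℕ∞) ≤ ((2 : ℕ) : ℕ∞) := le_trans hPn' hle
              have : m₀ ≤ 2 := by exact_mod_cast this
              omega
            set q' := Nat.findGreatest P n with hq'def
            have hfgle : q' ≤ n := Nat.findGreatest_le n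
            have hq₁le : n / m₀ ≤ q' := Nat.le_findGreatest (Nat.div_le_self n m₀) hq₁
            have hPq' : P q' := Nat.findGreatest_spec (Nat.div_le_self n m₀) hq₁
            have hq'n : q' < n := lt_of_le_of_ne hfgle (fun h => hPn (h ▸ hPq'))
            have hnotP : ¬ P (q' + 1) :=
              Nat.findGreatest_is_greatest (Nat.lt_succ_self q') (by omega)
            obtain ⟨N, hN1, hsrq1, hcondq1⟩ := sr_spec (hq_netop (q' + 1) (by omega))
            have hNlt : N < m₀ := by
              by_contra hge
              push_neg at hge
              exact hnotP ⟨by omega, by rw [hsrq1]; exact_mod_cast hge⟩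
            have hNq : N ≤ q' := by omega
            have hcont : SRCond (q' • c) (N + 1) := srcond_cont hcondq1 hNq
            have hle : sr (q' • c) ≤ ((N + 1 : ℕ) : ℕ∞) := sr_le (by omega) hcont
            have hge : (m₀ : ℕ∞) ≤ sr (q' • c) := hPq'.2
            have hsrq' : sr (q' • c) = (m₀ : ℕ∞) := by
              refine le_antisymm (le_trans hle ?_) hge
              exact_mod_cast (by omega : N + 1 ≤ m₀)
            refine ⟨q' • c, (hmem _).mpr (comp_nsmul ((hmem c).mp hc) hPq'.1), ?_⟩
            rw [hsrq', hvm]
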